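/- arXiv:1803.03005 — 2 statements merged into one kernel-verified Lean document; each statement's English description precedes it below -/
import Mathlib

section
/- Let $k \ge 2$ and let $t_{n,0} = t_{n-1} < \dots < t_{n,k} = t_n$ be Gauss–Lobatto nodes on $I_n = [t_{n-1}, t_n]$ whose quadrature rule $Q_n$ with positive weights is exact on $\mathbb{P}_{2k-1}$. Let $u \in \mathbb{P}_{k+2}(I_n; \mathbb{R})$ (playing the role of the Hermite interpolate $I^{k+2}_\tau u$) and let $R u \in \mathbb{P}_{k+1}(I_n; \mathbb{R})$ be defined by $(Ru)'(t_{n,\mu}) = u'(t_{n,\mu})$ for $\mu = 0,\dots,k$ and $Ru(t_{n-1}) = u(t_{n-1})$. Then $Ru(t_n) = u(t_n)$. -/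
/-!
Both `(Ru)'` and `u'` have degree at most `k + 1 ≤ 2k - 1` and agree at the nodes, so the exact
quadrature rule gives them the same integral over `[a, b]`; by the fundamental theorem of calculus
`Ru` and `u` then have the same increment from `a` to `b`.
-/

open Polynomial

theorem Polynomial.intervalIntegral_eval_derivative (p : ℝ[X]) (a b : ℝ) :
    ∫ s in a..b, p.derivative.eval s = p.eval b - p.eval a :=
  intervalIntegral.integral_eq_sub_of_hasDerivAt (fun x _ => p.hasDerivAt x)
    (p.derivative.continuous.intervalIntegrable _ _)

theorem intervalIntegral_eval_eq_of_quadrature_exact {ι : Type*} [Fintype ι]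
    {t ω : ι → ℝ} {a b : ℝ} {d : ℕ}
    (hexact : ∀ g : ℝ[X], g.natDegree ≤ d → ∑ i, ω i * g.eval (t i) = ∫ s in a..b, g.eval s)
    {p q : ℝ[X]} (hp : p.natDegree ≤ d) (hq : q.natDegree ≤ d)
    (hpq : ∀ i, p.eval (t i) = q.eval (t i)) :
    ∫ s in a..b, p.eval s = ∫ s in a..b, q.eval s := by
  rw [← hexact p hp, ← hexact q hq]
  simp only [hpq]

theorem stmt12_general (k : ℕ) (hk : 2 ≤ k) (a b : ℝ)
    (t : Fin (k + 1) → ℝ)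
    (ω : Fin (k + 1) → ℝ)
    (hexact : ∀ g : Polynomial ℝ, g.natDegree ≤ 2 * k - 1 →
      ∑ μ, ω μ * g.eval (t μ) = ∫ s in a..b, g.eval s)
    (u Ru : Polynomial ℝ) (hu : u.natDegree ≤ k + 2) (hRu : Ru.natDegree ≤ k + 1)
    (hder : ∀ μ, Ru.derivative.eval (t μ) = u.derivative.eval (t μ))
    (hval : Ru.eval a = u.eval a) :
    Ru.eval b = u.eval b := by
  have hRu' : Ru.derivative.natDegree ≤ 2 * k - 1 := by
    have := Ru.natDegree_derivative_le
    omega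
  have hu' : u.derivative.natDegree ≤ 2 * k - 1 := by
    have := u.natDegree_derivative_le
    omega
  have hint := intervalIntegral_eval_eq_of_quadrature_exact hexact hRu' hu' hder
  rw [Ru.intervalIntegral_eval_derivative, u.intervalIntegral_eval_derivative] at hint
  linarith

/-- Core computation of Lemma 4.1: for `k ≥ 2`, Gauss–Lobatto nodes
`t 0 = a < … < t k = b` with positive weights and quadrature exact on `ℙ_{2k-1}`,
if `Ru ∈ ℙ_{k+1}` satisfies `(Ru)'(t_μ) = u'(t_μ)` for all nodes and `Ru(a) = u(a)`
for a polynomial `u ∈ ℙ_{k+2}`, then `Ru(b) = u(b)`. -/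
theorem stmt12 (k : ℕ) (hk : 2 ≤ k) (a b : ℝ) (hab : a < b)
    (t : Fin (k + 1) → ℝ) (ht : StrictMono t) (ht0 : t 0 = a) (htk : t (Fin.last k) = b)
    (ω : Fin (k + 1) → ℝ) (hω : ∀ μ, 0 < ω μ)
    (hexact : ∀ g : Polynomial ℝ, g.natDegree ≤ 2 * k - 1 →
      ∑ μ, ω μ * g.eval (t μ) = ∫ s in a..b, g.eval s)
    (u Ru : Polynomial ℝ) (hu : u.natDegree ≤ k + 2) (hRu : Ru.natDegree ≤ k + 1)
    (hder : ∀ μ, Ru.derivative.eval (t μ) = u.derivative.eval (t μ))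
    (hval : Ru.eval a = u.eval a) :
    Ru.eval b = u.eval b :=
  stmt12_general k hk a b t ω hexact u Ru hu hRu hder hval
end

section
/- Let $k \ge 1$ and let $Q_n$ be a quadrature rule with $k+1$ nodes $t_{n,0},\dots,t_{n,k}$ on $I_n$, exact on polynomials of degree at most $2k-1$. Let $V$ be a real inner product space, let $G \in \mathbb{P}_k(I_n; V)$, and suppose that $Q_n(\langle G(\cdot), \phi(\cdot)\rangle) = 0$ for all $\phi \in \mathbb{P}_{k-1}(I_n; V)$ and additionally $G(t_{n,0}) = 0$. Then $G(t_{n,\mu}) = 0$ for all $\mu = 0, 1, \dots, k$, and hence $G \equiv 0$ on $I_n$. -/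
/-!
Let `ℓᵢ` be the Lagrange basis polynomial of the nodes `t₁, …, t_k` (degree `k - 1`) at `tᵢ`.
Since the rule is exact in degree `2k - 1`, `ωᵢ (tᵢ - t₀) = ∫ (x - t₀) ℓᵢ(x)² dx > 0`, so every
weight `ωᵢ` with `i ≥ 1` is positive. Testing the orthogonality relation with `φ = ℓᵢ • G(tᵢ)`
kills every node but `tᵢ` (at `t₀` because `G(t₀) = 0`), leaving `ωᵢ ‖G(tᵢ)‖² = 0`.
Finally `G` has degree `≤ k` and vanishes at the `k + 1` nodes; pairing with a fixed vector
reduces this to the scalar fact that such a polynomial is zero.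
-/

open scoped RealInnerProductSpace
open MeasureTheory Polynomial Finset

theorem Polynomial.intervalIntegral_eval_pos {q : ℝ[X]} {a b : ℝ} (hab : a < b) (hq : q ≠ 0)
    (hnn : ∀ x ∈ Set.Icc a b, 0 ≤ q.eval x) : 0 < ∫ x in a..b, q.eval x := by
  have hnn' : 0 ≤ᵐ[volume.restrict (Set.uIoc a b)] fun x => q.eval x := by
    rw [Filter.EventuallyLE, Set.uIoc_of_le hab.le, ae_restrict_iff' measurableSet_Ioc]
    exact Filter.Eventually.of_forall fun x hx => hnn x (Set.Ioc_subset_Icc_self hx)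
  rw [intervalIntegral.integral_pos_iff_support_of_nonneg_ae' hnn'
    (q.continuous.intervalIntegrable a b)]
  refine ⟨hab, ?_⟩
  have hroots : volume {x | q.IsRoot x} = 0 := (finite_setOfPred_isRoot hq).measure_zero _
  calc (0 : ENNReal) < volume (Set.Ioc a b \ {x | q.IsRoot x}) := by
        rw [measure_sdiff_null hroots, Real.volume_Ioc]
        simpa using hab
    _ ≤ volume (Function.support (fun x => q.eval x) ∩ Set.Ioc a b) :=
        measure_mono fun x hx => ⟨hx.2, hx.1⟩

theorem sum_range_pow_smul_coeff_smul {V : Type*} [AddCommGroup V] [Module ℝ V] {p : ℝ[X]}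
    {n : ℕ} (hp : p.natDegree < n) (x : ℝ) (v : V) :
    ∑ j ∈ range n, x ^ j • (p.coeff j • v) = p.eval x • v := by
  rw [eval_eq_sum_range' hp, Finset.sum_smul]
  exact Finset.sum_congr rfl fun j _ => by rw [smul_smul, mul_comm]

theorem sum_range_pow_smul_eq_zero_of_eval_eq_zero {V : Type*} [NormedAddCommGroup V]
    [InnerProductSpace ℝ V] {ι : Type*} [Fintype ι] {t : ι → ℝ} (ht : Function.Injective t)
    {n : ℕ} (hn : n ≤ Fintype.card ι) {c : ℕ → V}
    (hc : ∀ i, ∑ j ∈ range n, t i ^ j • c j = 0) (s : ℝ) :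
    ∑ j ∈ range n, s ^ j • c j = 0 := by
  set w := ∑ j ∈ range n, s ^ j • c j
  let P : ℝ[X] := ∑ j ∈ range n, C ⟪c j, w⟫ * X ^ j
  have hP : ∀ x : ℝ, ⟪∑ j ∈ range n, x ^ j • c j, w⟫ = P.eval x := by
    intro x
    simp only [P, sum_inner, real_inner_smul_left, eval_finsetSum, eval_mul, eval_C, eval_pow,
      eval_X, mul_comm]
  have hPdeg : P.degree < #(univ : Finset ι) := by
    refine (degree_sum_le _ _).trans_lt <| (Finset.sup_lt_iff (WithBot.bot_lt_coe _)).2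
      fun j hj => (degree_C_mul_X_pow_le _ _).trans_lt ?_
    rw [card_univ]
    exact_mod_cast (mem_range.1 hj).trans_le hn
  have hP0 : P = 0 := eq_zero_of_degree_lt_of_eval_index_eq_zero _ ht.injOn hPdeg
    fun i _ => by rw [← hP, hc, inner_zero_left]
  exact inner_self_eq_zero.mp (by rw [hP, hP0, eval_zero])

section Quadrature

variable {k : ℕ} {t : Fin (k + 1) → ℝ}

theorem natDegree_basis_erase_zero_add_one (ht : Function.Injective t) {i : Fin (k + 1)}
    (hi : i ≠ 0) : (Lagrange.basis (univ.erase 0) t i).natDegree + 1 = k := by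
  have hi_mem : i ∈ univ.erase 0 := mem_erase.2 ⟨hi, mem_univ i⟩
  rw [Lagrange.natDegree_basis ht.injOn hi_mem, Nat.sub_add_cancel (card_pos.2 ⟨i, hi_mem⟩),
    card_erase_of_mem (mem_univ 0), card_univ, Fintype.card_fin, Nat.add_sub_cancel]

theorem quadrature_weight_pos {a b : ℝ} {ω : Fin (k + 1) → ℝ} (hab : a < b) (ht : StrictMono t)
    (ht0 : t 0 = a) (hexact : ∀ g : ℝ[X], g.natDegree ≤ 2 * k - 1 →
      ∑ μ, ω μ * g.eval (t μ) = ∫ s in a..b, g.eval s)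
    {i : Fin (k + 1)} (hi : i ≠ 0) : 0 < ω i := by
  have hi_mem : i ∈ univ.erase 0 := mem_erase.2 ⟨hi, mem_univ i⟩
  set ℓ := Lagrange.basis (univ.erase 0) t i
  set Q : ℝ[X] := (X - C a) * ℓ ^ 2
  have hQ_eval : ∀ x, Q.eval x = (x - a) * ℓ.eval x ^ 2 := fun x => by simp [Q]
  have hQ_deg : Q.natDegree ≤ 2 * k - 1 := by
    have hℓ : ℓ.natDegree + 1 = k := natDegree_basis_erase_zero_add_one ht.injective hi
    calc Q.natDegree ≤ 1 + 2 * ℓ.natDegree :=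
          natDegree_mul_le.trans (add_le_add (natDegree_X_sub_C_le a) natDegree_pow_le)
      _ = 2 * k - 1 := by omega
  have hQ_nodes : ∑ μ, ω μ * Q.eval (t μ) = ω i * (t i - a) := by
    rw [sum_eq_single i (fun μ _ hμi => ?_) (absurd (mem_univ i)), hQ_eval,
      Lagrange.eval_basis_self ht.injective.injOn hi_mem, one_pow, mul_one]
    rcases eq_or_ne μ 0 with rfl | hμ
    · rw [hQ_eval, ht0, sub_self, zero_mul, mul_zero]
    · rw [hQ_eval, Lagrange.eval_basis_of_ne hμi.symm (mem_erase.2 ⟨hμ, mem_univ μ⟩)]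
      ring
  have hQ_ne : Q ≠ 0 :=
    mul_ne_zero (X_sub_C_ne_zero a)
      (pow_ne_zero _ (Lagrange.basis_ne_zero ht.injective.injOn hi_mem))
  have hQ_nonneg : ∀ x ∈ Set.Icc a b, 0 ≤ Q.eval x := fun x hx => by
    rw [hQ_eval]; exact mul_nonneg (sub_nonneg.2 hx.1) (sq_nonneg _)
  have hQ_int := intervalIntegral_eval_pos hab hQ_ne hQ_nonneg
  rw [← hexact Q hQ_deg, hQ_nodes] at hQ_int
  exact pos_of_mul_pos_left hQ_int (sub_nonneg.2 (ht0 ▸ ht.monotone (Fin.zero_le i)))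

theorem eq_zero_at_node_of_quadrature_inner_eq_zero {V : Type*} [NormedAddCommGroup V]
    [InnerProductSpace ℝ V] {ω : Fin (k + 1) → ℝ} (ht : Function.Injective t) {G : ℝ → V}
    (horth : ∀ d : ℕ → V, ∑ μ, ω μ * ⟪G (t μ), ∑ j ∈ range k, t μ ^ j • d j⟫ = 0)
    (h0 : G (t 0) = 0) {i : Fin (k + 1)} (hi : i ≠ 0) (hωi : 0 < ω i) : G (t i) = 0 := by
  have hi_mem : i ∈ univ.erase 0 := mem_erase.2 ⟨hi, mem_univ i⟩
  set ℓ := Lagrange.basis (univ.erase 0) t i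
  have hℓ : ℓ.natDegree < k := Nat.lt_of_succ_le (natDegree_basis_erase_zero_add_one ht hi).le
  have htest := horth fun j => ℓ.coeff j • G (t i)
  simp_rw [sum_range_pow_smul_coeff_smul hℓ] at htest
  rw [sum_eq_single i (fun μ _ hμi => ?_) (absurd (mem_univ i)),
    Lagrange.eval_basis_self ht.injOn hi_mem, one_smul] at htest
  · exact inner_self_eq_zero.mp ((mul_eq_zero.mp htest).resolve_left hωi.ne')
  rcases eq_or_ne μ 0 with rfl | hμ
  · rw [h0, inner_zero_left, mul_zero]
  · rw [Lagrange.eval_basis_of_ne hμi.symm (mem_erase.2 ⟨hμ, mem_univ μ⟩), zero_smul,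
      inner_zero_right, mul_zero]

end Quadrature

theorem stmt18_general {V : Type*} [NormedAddCommGroup V] [InnerProductSpace ℝ V]
    (k : ℕ) (a b : ℝ) (hab : a < b)
    (t : Fin (k + 1) → ℝ) (ht : StrictMono t) (ht0 : t 0 = a)
    (ω : Fin (k + 1) → ℝ)
    (hexact : ∀ g : Polynomial ℝ, g.natDegree ≤ 2 * k - 1 →
      ∑ μ, ω μ * g.eval (t μ) = ∫ s in a..b, g.eval s)
    (cG : ℕ → V) (G : ℝ → V)
    (hG : ∀ s, G s = ∑ j ∈ Finset.range (k + 1), s ^ j • cG j)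
    (horth : ∀ d : ℕ → V,
      ∑ μ, ω μ * ⟪G (t μ), ∑ j ∈ Finset.range k, (t μ) ^ j • d j⟫ = 0)
    (h0 : G (t 0) = 0) :
    (∀ μ, G (t μ) = 0) ∧ ∀ s ∈ Set.Icc a b, G s = 0 := by
  have hnodes : ∀ μ, G (t μ) = 0 := fun μ => by
    rcases eq_or_ne μ 0 with rfl | hμ
    · exact h0
    · exact eq_zero_at_node_of_quadrature_inner_eq_zero ht.injective horth h0 hμ
        (quadrature_weight_pos hab ht ht0 hexact hμ)
  refine ⟨hnodes, fun s _ => ?_⟩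
  simp only [hG] at hnodes ⊢
  exact sum_range_pow_smul_eq_zero_of_eval_eq_zero ht.injective (by simp) hnodes s

/-- Abstract version of the argument in Lemma 3.7, eqs. (3.15)–(3.16): if a `V`-valued
polynomial `G` of degree at most `k` satisfies `Q_n(⟨G, φ⟩) = 0` for all `V`-valued
polynomial test functions `φ` of degree at most `k-1`, and `G` vanishes at the first
quadrature node, then `G` vanishes at all quadrature nodes and hence identically. -/
theorem stmt18 {V : Type*} [NormedAddCommGroup V] [InnerProductSpace ℝ V]
    (k : ℕ) (hk : 1 ≤ k) (a b : ℝ) (hab : a < b)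
    (t : Fin (k + 1) → ℝ) (ht : StrictMono t) (ht0 : t 0 = a) (htk : t (Fin.last k) = b)
    (ω : Fin (k + 1) → ℝ)
    (hexact : ∀ g : Polynomial ℝ, g.natDegree ≤ 2 * k - 1 →
      ∑ μ, ω μ * g.eval (t μ) = ∫ s in a..b, g.eval s)
    (cG : ℕ → V) (G : ℝ → V)
    (hG : ∀ s, G s = ∑ j ∈ Finset.range (k + 1), s ^ j • cG j)
    (horth : ∀ d : ℕ → V,
      ∑ μ, ω μ * ⟪G (t μ), ∑ j ∈ Finset.range k, (t μ) ^ j • d j⟫ = 0)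
    (h0 : G (t 0) = 0) :
    (∀ μ, G (t μ) = 0) ∧ ∀ s ∈ Set.Icc a b, G s = 0 :=
  stmt18_general k a b hab t ht ht0 ω hexact cG G hG horth h0
end
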